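/- arXiv:2501.17959 — 3 statements merged into one kernel-verified Lean document; each statement's English description precedes it below -/
import Mathlib

section
/- The function f(n,m,p,o) = 2^{o(n−m)} · ∏_{i=1}^{m} (2^{n+1} − 2^i)(2^{n−i+1+2p+o} + 1)/(2^m − 2^{i−1}) satisfies the recursion f(n,m,p,o) = A + B where A = 0 if n = m and A = 2^o · f(n−1, m, p+1, o) otherwise, and B = 0 if m = 0 and B = (2^{2p+o+2} + 2) · f(n−1, m−1, p, o+1) otherwise, with base case f(0,0,p,o) = 1. -/
/-!
Write `n = m + d`. Splitting the product defining `f` into its three factors gives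
`f (m + d) m p o = 2^(o d) · N(m + d + 1, m) · P(d + 1 + 2p + o, m) / D(m)` with
`N(a, m) = ∏_{i<m} (2^a - 2^(i+1))`, `D(m) = ∏_{i<m} (2^m - 2^i)` and
`P(c, m) = ∏_{j<m} (2^(c+j) + 1)`. Each of the three products changes by a single explicit
factor when `m` or its first argument moves by one, so after cancelling the common factors
both sides of the recursion are explicit polynomials in `2^m`, `2^d`, `2^p` and `2^o`.
-/

/-- The counting function for ZX canonical forms. -/
noncomputable def f (n m p o : ℕ) : ℚ :=
  2 ^ (o * (n - m)) *
    ∏ i ∈ Finset.Icc 1 m,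
      ((2 : ℚ) ^ (n + 1) - 2 ^ i) * ((2 : ℚ) ^ (n - i + 1 + 2 * p + o) + 1) /
        ((2 : ℚ) ^ m - 2 ^ (i - 1))

open Finset

def numProd (a m : ℕ) : ℚ := ∏ i ∈ range m, ((2 : ℚ) ^ a - 2 ^ (i + 1))

def denProd (m : ℕ) : ℚ := ∏ i ∈ range m, ((2 : ℚ) ^ m - 2 ^ i)

def powSuccProd (c m : ℕ) : ℚ := ∏ j ∈ range m, ((2 : ℚ) ^ (c + j) + 1)

lemma numProd_succ (a m : ℕ) : numProd a (m + 1) = numProd a m * (2 ^ a - 2 ^ (m + 1)) :=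
  prod_range_succ _ _

lemma numProd_succ_succ (a m : ℕ) :
    numProd (a + 1) (m + 1) = 2 ^ (m + 1) * (2 ^ a - 1) * numProd a m := by
  have double : ∀ i ∈ range (m + 1), ((2 : ℚ) ^ (a + 1) - 2 ^ (i + 1)) = 2 * (2 ^ a - 2 ^ i) :=
    fun i _ => by ring
  rw [numProd, prod_congr rfl double, prod_mul_distrib, prod_const, card_range,
    prod_range_succ', numProd]
  ring

lemma denProd_succ (m : ℕ) : denProd (m + 1) = 2 ^ m * (2 ^ (m + 1) - 1) * denProd m := by
  have double : ∀ i ∈ range m, ((2 : ℚ) ^ (m + 1) - 2 ^ (i + 1)) = 2 * (2 ^ m - 2 ^ i) :=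
    fun i _ => by ring
  rw [denProd, prod_range_succ', prod_congr rfl double, prod_mul_distrib, prod_const,
    card_range, denProd]
  ring

lemma denProd_ne_zero (m : ℕ) : denProd m ≠ 0 :=
  prod_ne_zero_iff.mpr fun _ hi =>
    sub_ne_zero.mpr (pow_lt_pow_right₀ one_lt_two (mem_range.mp hi)).ne'

lemma two_pow_succ_sub_one_ne_zero (m : ℕ) : (2 : ℚ) ^ (m + 1) - 1 ≠ 0 :=
  sub_ne_zero.mpr (one_lt_pow₀ one_lt_two m.succ_ne_zero).ne'

lemma powSuccProd_succ (c m : ℕ) :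
    powSuccProd c (m + 1) = powSuccProd c m * (2 ^ (c + m) + 1) :=
  prod_range_succ _ _

lemma powSuccProd_succ' (c m : ℕ) :
    powSuccProd c (m + 1) = (2 ^ c + 1) * powSuccProd (c + 1) m := by
  rw [powSuccProd, prod_range_succ', mul_comm, powSuccProd]
  simp only [add_zero, add_assoc, add_comm 1]

lemma f_self_add_eq (m d p o : ℕ) :
    f (m + d) m p o =
      2 ^ (o * d) * numProd (m + d + 1) m * powSuccProd (d + 1 + 2 * p + o) m / denProd m := by
  have reflect : ∏ i ∈ range m, ((2 : ℚ) ^ (m + d - (1 + i) + 1 + 2 * p + o) + 1) =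
      powSuccProd (d + 1 + 2 * p + o) m := by
    rw [powSuccProd, ← prod_range_reflect]
    refine prod_congr rfl fun j hj => ?_
    have := mem_range.mp hj
    congr 2
    omega
  have den : ∏ i ∈ range m, ((2 : ℚ) ^ m - 2 ^ (1 + i - 1)) = denProd m :=
    prod_congr rfl fun i _ => by rw [Nat.add_sub_cancel_left]
  rw [f, ← Ico_add_one_right_eq_Icc, prod_Ico_eq_prod_range, Nat.add_sub_cancel,
    prod_div_distrib, prod_mul_distrib, reflect, den, Nat.add_sub_cancel_left]
  simp only [numProd, add_comm 1]
  ring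

lemma f_zero_right (n p o : ℕ) : f n 0 p o = 2 ^ (o * n) := by
  simp [f]

lemma f_succ_succ_self (m p o : ℕ) :
    f (m + 1) (m + 1) p o = (2 ^ (2 * p + o + 2) + 2) * f m m p (o + 1) := by
  have h₁ := f_self_add_eq (m + 1) 0 p o
  have h₂ := f_self_add_eq m 0 p (o + 1)
  simp only [add_zero] at h₁ h₂
  rw [h₁, h₂, numProd_succ_succ, powSuccProd_succ', denProd_succ]
  field_simp [denProd_ne_zero, two_pow_succ_sub_one_ne_zero]
  ring_nf

lemma f_succ_succ (m d p o : ℕ) :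
    f (m + 1 + (d + 1)) (m + 1) p o =
      2 ^ o * f (m + 1 + d) (m + 1) (p + 1) o +
        (2 ^ (2 * p + o + 2) + 2) * f (m + (d + 1)) m p (o + 1) := by
  set a := m + d + 2
  set c := d + 2 * p + o + 2
  have hLHS := f_self_add_eq (m + 1) (d + 1) p o
  have hA := f_self_add_eq (m + 1) d (p + 1) o
  have hB := f_self_add_eq m (d + 1) p (o + 1)
  rw [show m + 1 + (d + 1) + 1 = a + 1 by omega, show d + 1 + 1 + 2 * p + o = c by omega,
    numProd_succ_succ, powSuccProd_succ'] at hLHS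
  rw [show m + 1 + d + 1 = a by omega, show d + 1 + 2 * (p + 1) + o = c + 1 by omega,
    numProd_succ, powSuccProd_succ] at hA
  rw [show m + (d + 1) + 1 = a by omega, show d + 1 + 1 + 2 * p + (o + 1) = c + 1 by omega] at hB
  rw [hLHS, hA, hB, denProd_succ]
  field_simp [denProd_ne_zero, two_pow_succ_sub_one_ne_zero]
  ring

/-- `f` satisfies the recursion `f(n,m,p,o) = A + B` with
`A = 0` if `n = m` and `A = 2^o · f(n−1, m, p+1, o)` otherwise, and
`B = 0` if `m = 0` and `B = (2^(2p+o+2) + 2) · f(n−1, m−1, p, o+1)` otherwise,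
with base case `f(0,0,p,o) = 1`. -/
theorem f_recursion :
    (∀ p o : ℕ, f 0 0 p o = 1) ∧
    (∀ n m p o : ℕ, m ≤ n → ¬(n = 0 ∧ m = 0) →
      f n m p o =
        (if n = m then 0 else 2 ^ o * f (n - 1) m (p + 1) o) +
        (if m = 0 then 0 else ((2 : ℚ) ^ (2 * p + o + 2) + 2) * f (n - 1) (m - 1) p (o + 1))) := by
  refine ⟨fun p o => by simp [f_zero_right], fun n m p o hmn hnm => ?_⟩
  obtain ⟨d, rfl⟩ := Nat.exists_eq_add_of_le hmn
  rcases m with _ | m <;> rcases d with _ | d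
  · exact absurd ⟨rfl, rfl⟩ hnm
  · simp [f_zero_right, mul_add, pow_add, mul_comm]
  · simpa using f_succ_succ_self m p o
  · rw [if_neg (by omega), if_neg (by omega), f_succ_succ, Nat.add_sub_cancel,
      show m + 1 + (d + 1) - 1 = m + 1 + d by omega, add_right_comm m 1 d, add_assoc m d]
end

section
/- The number of CSS codes with n physical qubits, p independent Z stabilizers, and q independent X stabilizers equals [∏_{i=1}^{p}(2^n − 2^{i−1})/∏_{i=1}^{p}(2^p − 2^{i−1})] · [∏_{i=1}^{q}(2^{n−p} − 2^{i−1})/∏_{i=1}^{q}(2^q − 2^{i−1})]. -/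
/-!
Choose `V` first and then `W` inside `V^⊥`. The dot product is nondegenerate, so `V^⊥` has
dimension `n - p` whatever `V` is, and the count is `G(n, p) · G(n - p, q)`, where `G(m, k)` is the
number of `k`-dimensional subspaces of an `m`-dimensional space over `F_q`. To compute `G(m, k)`,
count linearly independent `k`-tuples: there are `∏_{i<k} (q^m - q^i)` of them, and each
`k`-dimensional subspace is spanned by exactly `∏_{i<k} (q^k - q^i)` of them.
-/

open Module Submodule Finset

theorem Nat.cast_card_sigma_of_card_eq {R α : Type*} [Semiring R] [Finite α] {β : α → Type*}
    [∀ a, Finite (β a)] {c : R} (h : ∀ a, (Nat.card (β a) : R) = c) :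
    (Nat.card (Sigma β) : R) = Nat.card α * c := by
  have := Fintype.ofFinite α
  rw [Nat.card_sigma, Nat.cast_sum, sum_congr rfl fun a _ => h a, sum_const, Finset.card_univ,
    nsmul_eq_mul, Nat.card_eq_fintype_card]

section SpanLinearIndependent

variable (K : Type*) {V : Type*} [DivisionRing K] [AddCommGroup V] [Module K V] (k : ℕ)

def spanOfLinearIndependent (s : {s : Fin k → V // LinearIndependent K s}) :
    {W : Submodule K V // finrank K W = k} :=
  ⟨span K (Set.range s.1), by rw [finrank_span_eq_card s.2, Fintype.card_fin]⟩

variable {K k} [FiniteDimensional K V]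

def spanOfLinearIndependentFiberEquiv (W : {W : Submodule K V // finrank K W = k}) :
    {s // spanOfLinearIndependent K k s = W} ≃ {t : Fin k → W.1 // LinearIndependent K t} where
  toFun s := ⟨fun i => ⟨s.1.1 i, congrArg Subtype.val s.2 ▸ subset_span (Set.mem_range_self i)⟩,
    LinearIndependent.of_comp W.1.subtype s.1.2⟩
  invFun t := ⟨⟨W.1.subtype ∘ t.1, t.2.map' W.1.subtype (ker_subtype _)⟩, by
    have hspan : span K (Set.range t.1) = ⊤ :=
      eq_top_of_finrank_eq (by rw [finrank_span_eq_card t.2, Fintype.card_fin, W.2])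
    refine Subtype.ext ?_
    change span K (Set.range (W.1.subtype ∘ t.1)) = W.1
    rw [Set.range_comp, span_image, hspan, map_subtype_top]⟩
  left_inv _ := rfl
  right_inv _ := rfl

end SpanLinearIndependent

theorem Submodule.card_le_and_finrank_eq {R M : Type*} [Ring R] [AddCommGroup M] [Module R M]
    (U : Submodule R M) (k : ℕ) :
    Nat.card {W : Submodule R M // W ≤ U ∧ finrank R W = k} =
      Nat.card {W : Submodule R U // finrank R W = k} :=
  Nat.card_congr <| ((Equiv.subtypeEquiv (MapSubtype.orderIso U).toEquiv fun W => by
    change _ ↔ finrank R (W.map U.subtype) = k; rw [finrank_map_subtype_eq]).trans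
      (Equiv.subtypeSubtypeEquivSubtypeInter (· ≤ U) (finrank R · = k))).symm

def orthogonalPairsSigmaEquiv {R M : Type*} [CommRing R] [AddCommGroup M] [Module R M]
    (B : LinearMap.BilinForm R M) (p r : ℕ) :
    {VW : Submodule R M × Submodule R M //
        finrank R VW.1 = p ∧ finrank R VW.2 = r ∧ VW.2 ≤ B.orthogonal VW.1} ≃
      Σ U : {U : Submodule R M // finrank R U = p},
        {W : Submodule R M // W ≤ B.orthogonal U.1 ∧ finrank R W = r} where
  toFun x := ⟨⟨x.1.1, x.2.1⟩, ⟨x.1.2, x.2.2.2, x.2.2.1⟩⟩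
  invFun y := ⟨(y.1.1, y.2.1), y.1.2, y.2.2.2, y.2.2.1⟩
  left_inv _ := rfl
  right_inv _ := rfl

section FiniteField

variable {K V : Type*} [Field K] [Fintype K] [AddCommGroup V] [Module K V] [Finite V]

local notation "q" => Fintype.card K

theorem cast_card_linearIndependent {k : ℕ} (hk : k ≤ finrank K V) :
    (Nat.card {s : Fin k → V // LinearIndependent K s} : ℚ) =
      ∏ i : Fin k, ((q : ℚ) ^ finrank K V - q ^ (i : ℕ)) := by
  rw [card_linearIndependent hk, Nat.cast_prod]
  refine prod_congr rfl fun i _ => ?_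
  rw [Nat.cast_sub (Nat.pow_le_pow_right Fintype.card_pos (i.2.le.trans hk))]
  push_cast
  rfl

theorem card_pow_sub_card_pow_ne_zero {i k : ℕ} (hik : i < k) : (q : ℚ) ^ k - q ^ i ≠ 0 :=
  sub_ne_zero.mpr (pow_lt_pow_right₀ (by exact_mod_cast Fintype.one_lt_card) hik).ne'

theorem cast_card_finrank_eq {k : ℕ} (hk : k ≤ finrank K V) :
    (Nat.card {W : Submodule K V // finrank K W = k} : ℚ) =
      ∏ i : Fin k, ((q : ℚ) ^ finrank K V - q ^ (i : ℕ)) / (q ^ k - q ^ (i : ℕ)) := by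
  have hcount := cast_card_linearIndependent (K := K) (V := V) hk
  rw [← Nat.card_congr (Equiv.sigmaFiberEquiv (spanOfLinearIndependent K k)),
    Nat.cast_card_sigma_of_card_eq fun W => by
      rw [Nat.card_congr (spanOfLinearIndependentFiberEquiv W),
        cast_card_linearIndependent W.2.ge, W.2]] at hcount
  rw [prod_div_distrib, eq_div_iff (prod_ne_zero_iff.mpr fun i _ =>
    card_pow_sub_card_pow_ne_zero i.2), hcount]

theorem cast_card_orthogonalPairs {B : LinearMap.BilinForm K V} (hB : B.Nondegenerate) {p r : ℕ}
    (hpr : p + r ≤ finrank K V) :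
    (Nat.card {VW : Submodule K V × Submodule K V //
        finrank K VW.1 = p ∧ finrank K VW.2 = r ∧ VW.2 ≤ B.orthogonal VW.1} : ℚ) =
      (∏ i : Fin p, ((q : ℚ) ^ finrank K V - q ^ (i : ℕ)) / (q ^ p - q ^ (i : ℕ))) *
        ∏ i : Fin r, ((q : ℚ) ^ (finrank K V - p) - q ^ (i : ℕ)) / (q ^ r - q ^ (i : ℕ)) := by
  have hfiber (U : {U : Submodule K V // finrank K U = p}) :
      (Nat.card {W : Submodule K V // W ≤ B.orthogonal U.1 ∧ finrank K W = r} : ℚ) =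
        ∏ i : Fin r, ((q : ℚ) ^ (finrank K V - p) - q ^ (i : ℕ)) / (q ^ r - q ^ (i : ℕ)) := by
    have hU : finrank K (B.orthogonal U.1) = finrank K V - p := by
      rw [LinearMap.BilinForm.finrank_orthogonal hB, U.2]
    rw [card_le_and_finrank_eq, cast_card_finrank_eq (by omega), hU]
  rw [Nat.card_congr (orthogonalPairsSigmaEquiv B p r), Nat.cast_card_sigma_of_card_eq hfiber,
    cast_card_finrank_eq (by omega)]

end FiniteField

theorem prod_Icc_one_sub_one_eq_prod_fin {M : Type*} [CommMonoid M] (f : ℕ → M) (n : ℕ) :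
    ∏ i ∈ Icc 1 n, f (i - 1) = ∏ i : Fin n, f i := by
  rw [Fin.prod_univ_eq_prod_range, ← Ico_add_one_right_eq_Icc, prod_Ico_eq_prod_range]
  simp

theorem dotProductBilin_nondegenerate (R n : Type*) [CommRing R] [Fintype n] :
    (dotProductBilin R R : LinearMap.BilinForm R (n → R)).Nondegenerate :=
  ⟨fun v hv => dotProduct_eq_zero v hv,
    fun w hw => dotProduct_eq_zero w fun v => dotProduct_comm w v ▸ hw v⟩

/-- The number of CSS codes with `n` physical qubits, `p` independent `Z` stabilizers and
`q` independent `X` stabilizers: the number of pairs `(V, W)` where `V` is a `p`-dimensional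
subspace of `F_2^n` and `W` is a `q`-dimensional subspace orthogonal to `V` (with respect to
the standard bilinear form) equals
`∏_{i=1}^p (2^n − 2^(i−1))/(2^p − 2^(i−1)) · ∏_{i=1}^q (2^(n−p) − 2^(i−1))/(2^q − 2^(i−1))`. -/
theorem css_code_count (n p q : ℕ) (h : p + q ≤ n) :
    (Nat.card {VW : Submodule (ZMod 2) (Fin n → ZMod 2) ×
        Submodule (ZMod 2) (Fin n → ZMod 2) //
          Module.finrank (ZMod 2) VW.1 = p ∧ Module.finrank (ZMod 2) VW.2 = q ∧
          ∀ w ∈ VW.2, ∀ v ∈ VW.1, ∑ i, v i * w i = 0} : ℚ)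
      = (∏ i ∈ Finset.Icc 1 p, ((2 : ℚ) ^ n - 2 ^ (i - 1)) / ((2 : ℚ) ^ p - 2 ^ (i - 1))) *
        ∏ i ∈ Finset.Icc 1 q, ((2 : ℚ) ^ (n - p) - 2 ^ (i - 1)) / ((2 : ℚ) ^ q - 2 ^ (i - 1)) := by
  have hn : finrank (ZMod 2) (Fin n → ZMod 2) = n := finrank_fin_fun _
  have hcount := cast_card_orthogonalPairs (dotProductBilin_nondegenerate (ZMod 2) (Fin n))
    (by rwa [hn])
  rw [hn, ZMod.card] at hcount
  rw [prod_Icc_one_sub_one_eq_prod_fin (fun i => ((2 : ℚ) ^ n - 2 ^ i) / (2 ^ p - 2 ^ i)),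
    prod_Icc_one_sub_one_eq_prod_fin (fun i => ((2 : ℚ) ^ (n - p) - 2 ^ i) / (2 ^ q - 2 ^ i))]
  -- `∀ w ∈ W, ∀ v ∈ V, ∑ i, v i * w i = 0` unfolds to `W ≤ (dotProductBilin _ _).orthogonal V`
  exact_mod_cast hcount
end

section
/- Vizing-type depth bound for CZ-gate scheduling: if G is a simple graph with maximum degree Δ, then the edges of G can be partitioned into at most Δ + 1 matchings; consequently, a circuit consisting of one CZ gate per edge of G can be arranged into at most Δ + 1 layers of disjoint gates. -/
/-!
Vizing's argument, by induction on the edges. Let `xy` be the last uncoloured edge, with every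
vertex missing some colour. Grow a fan `y = f 0, f 1, …` of neighbours of `x`, where the colour of
`x (f (i+1))` is missing at `f i`. If the colour `d` missing at the tip `f k` is also missing at
`x`, shift every colour of the fan one spoke back and colour `x (f k)` with `d`. Otherwise the fan
eventually repeats: `d` sits on a spoke `x (f (j+1))` with `j < k`. With `c` missing at `x`, the
vertices `x`, `f j`, `f k` each have at most one `c`/`d`-edge, so they are ends of paths in the
`c`/`d`-subgraph and cannot all lie on one. Swapping `c` and `d` on a suitable component makes a
common colour missing at `x` and at the tip of the fan `f 0, …, f j` or `f 0, …, f k`, and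
shifting finishes as before.
-/

theorem exists_first_stop_or_repeat {β : Type*} [Finite β] (f : ℕ → β) (Q : ℕ → Prop) :
    ∃ k, Set.InjOn f (Set.Iic k) ∧ (∀ i < k, ¬ Q i) ∧ (Q k ∨ ∃ j ≤ k, f (k + 1) = f j) := by
  classical
  have hinj {n} (h : ∀ i < n, ∀ j ≤ i, f (i + 1) ≠ f j) : Set.InjOn f (Set.Iic n) := by
    have hlt {i j} (hij : i < j) (hj : j ≤ n) : f j ≠ f i := by
      obtain ⟨j, rfl⟩ : ∃ j', j = j' + 1 := ⟨j - 1, by omega⟩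
      exact h j (by omega) i (by omega)
    intro i hi j hj hij
    rcases lt_trichotomy i j with h | h | h
    exacts [absurd hij.symm (hlt h hj), h, absurd hij (hlt h hi)]
  have hex : ∃ n, Q n ∨ ∃ j ≤ n, f (n + 1) = f j := by
    by_contra! h
    exact not_injective_infinite_finite f fun i j hij ↦
      hinj (n := max i j) (fun n _ j hj ↦ (h n).2 j hj) (le_max_left i j) (le_max_right i j) hij
  exact ⟨Nat.find hex, hinj fun i hi j hj h ↦ Nat.find_min hex hi (.inr ⟨j, hj, h⟩),
    fun i hi h ↦ Nat.find_min hex hi (.inl h), Nat.find_spec hex⟩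

namespace SimpleGraph

variable {V α : Type*}

def IsProperEdgeColoring (G : SimpleGraph V) (C : Sym2 V → α) : Prop :=
  ∀ ⦃u v w⦄, G.Adj u v → G.Adj u w → v ≠ w → C s(u, v) ≠ C s(u, w)

def IsMissing (G : SimpleGraph V) (C : Sym2 V → α) (v : V) (a : α) : Prop :=
  ∀ ⦃w⦄, G.Adj v w → C s(v, w) ≠ a

variable {G H : SimpleGraph V} {C : Sym2 V → α} {x y z v : V} {a : α}

theorem IsProperEdgeColoring.mono (hC : G.IsProperEdgeColoring C) (h : H ≤ G) :
    H.IsProperEdgeColoring C :=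
  fun _ _ _ huv huw ↦ hC (h huv) (h huw)

theorem IsMissing.mono (hv : G.IsMissing C v a) (h : H ≤ G) : H.IsMissing C v a :=
  fun _ hvw ↦ hv (h hvw)

theorem IsProperEdgeColoring.ne_of_mem (hC : G.IsProperEdgeColoring C) {e₁ e₂ : Sym2 V}
    (he₁ : e₁ ∈ G.edgeSet) (he₂ : e₂ ∈ G.edgeSet) (hne : e₁ ≠ e₂) (hv₁ : v ∈ e₁)
    (hv₂ : v ∈ e₂) : C e₁ ≠ C e₂ := by
  obtain ⟨u, rfl⟩ := Sym2.mem_iff_exists.1 hv₁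
  obtain ⟨w, rfl⟩ := Sym2.mem_iff_exists.1 hv₂
  exact hC he₁ he₂ fun huw ↦ hne (huw ▸ rfl)

theorem exists_isMissing_of_le [Fintype α] [Fintype (G.neighborSet v)] (hHG : H ≤ G)
    (hv : G.degree v < Fintype.card α) (C : Sym2 V → α) : ∃ a, H.IsMissing C v a := by
  classical
  obtain ⟨a, -, ha⟩ := Finset.exists_mem_notMem_of_card_lt_card
    (s := (G.neighborFinset v).image fun w ↦ C s(v, w)) (t := Finset.univ)
    (Finset.card_image_le.trans_lt (by simpa using hv))
  exact ⟨a, fun w hvw hw ↦ ha (Finset.mem_image.2 ⟨w, by simpa using hHG hvw, hw⟩)⟩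

section Update

variable [DecidableEq V]

theorem IsProperEdgeColoring.update_of_isMissing (hxy : G.Adj x y)
    (hC : (G.deleteEdges {s(x, y)}).IsProperEdgeColoring C)
    (hx : (G.deleteEdges {s(x, y)}).IsMissing C x a)
    (hy : (G.deleteEdges {s(x, y)}).IsMissing C y a) :
    G.IsProperEdgeColoring (Function.update C s(x, y) a) := by
  have hmiss : ∀ ⦃u w⦄, u ∈ s(x, y) → G.Adj u w → s(u, w) ≠ s(x, y) → C s(u, w) ≠ a := by
    intro u w hu huw hne
    have huw' : (G.deleteEdges {s(x, y)}).Adj u w := deleteEdges_adj.2 ⟨huw, hne⟩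
    rcases Sym2.mem_iff.1 hu with rfl | rfl
    exacts [hx huw', hy huw']
  intro u v w huv huw hvw
  by_cases hv : s(u, v) = s(x, y) <;> by_cases hw : s(u, w) = s(x, y)
  · exact absurd (Sym2.congr_right.1 (hv.trans hw.symm)) hvw
  · rw [Function.update_of_ne hw, hv, Function.update_self]
    exact (hmiss (hv ▸ Sym2.mem_mk_left u v) huw hw).symm
  · rw [Function.update_of_ne hv, hw, Function.update_self]
    exact hmiss (hw ▸ Sym2.mem_mk_left u w) huv hv
  · rw [Function.update_of_ne hv, Function.update_of_ne hw]
    exact hC (deleteEdges_adj.2 ⟨huv, hv⟩) (deleteEdges_adj.2 ⟨huw, hw⟩) hvw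

theorem IsProperEdgeColoring.update_shift (hxy : G.Adj x y) (hxz : G.Adj x z) (hyz : y ≠ z)
    (hC : (G.deleteEdges {s(x, y)}).IsProperEdgeColoring C)
    (hy : (G.deleteEdges {s(x, y)}).IsMissing C y (C s(x, z))) :
    (G.deleteEdges {s(x, z)}).IsProperEdgeColoring (Function.update C s(x, y) (C s(x, z))) := by
  have hle : (G.deleteEdges {s(x, z)}).deleteEdges {s(x, y)} ≤ G.deleteEdges {s(x, y)} := by
    rw [deleteEdges_deleteEdges]
    exact deleteEdges_anti Set.subset_union_right
  refine IsProperEdgeColoring.update_of_isMissing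
    (deleteEdges_adj.2 ⟨hxy, mt Sym2.congr_right.1 hyz⟩) (hC.mono hle) ?_ (hy.mono hle)
  intro t hxt
  obtain ⟨hxt, hty⟩ := deleteEdges_adj.1 hxt
  obtain ⟨hxt, htz⟩ := deleteEdges_adj.1 hxt
  exact hC (deleteEdges_adj.2 ⟨hxt, hty⟩)
    (deleteEdges_adj.2 ⟨hxz, mt Sym2.congr_right.1 hyz.symm⟩) fun h ↦ htz (h ▸ Set.mem_singleton _)

theorem IsMissing.update_of_ne (hv : (G.deleteEdges {s(x, y)}).IsMissing C v a) (hvx : v ≠ x)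
    (hvy : v ≠ y) (b : α) :
    (G.deleteEdges {s(x, z)}).IsMissing (Function.update C s(x, y) b) v a := by
  intro w hvw
  have hne : s(v, w) ≠ s(x, y) := fun h ↦ by
    rcases Sym2.mem_iff.1 (h ▸ Sym2.mem_mk_left v w) with h | h
    exacts [hvx h, hvy h]
  rw [Function.update_of_ne hne]
  exact hv (deleteEdges_adj.2 ⟨(deleteEdges_adj.1 hvw).1, hne⟩)

theorem IsMissing.update_shift (hx : (G.deleteEdges {s(x, y)}).IsMissing C x a)
    (hxz : G.Adj x z) (hyz : y ≠ z) :
    (G.deleteEdges {s(x, z)}).IsMissing (Function.update C s(x, y) (C s(x, z))) x a := by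
  intro w hxw
  by_cases hw : s(x, w) = s(x, y)
  · rw [hw, Function.update_self]
    exact hx (deleteEdges_adj.2 ⟨hxz, mt Sym2.congr_right.1 hyz.symm⟩)
  · rw [Function.update_of_ne hw]
    exact hx (deleteEdges_adj.2 ⟨(deleteEdges_adj.1 hxw).1, hw⟩)

end Update

theorem Walk.IsPath.getVert_eq_getVert
    (hdeg : ∀ v, (G.neighborSet v).encard ≤ 2) (hx : (G.neighborSet x).encard ≤ 1)
    {u w : V} {p : G.Walk x u} {q : G.Walk x w} (hp : p.IsPath) (hq : q.IsPath) {i : ℕ}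
    (hip : i ≤ p.length) (hiq : i ≤ q.length) : p.getVert i = q.getVert i := by
  induction i using Nat.twoStepInduction with
  | zero => rw [Walk.getVert_zero, Walk.getVert_zero]
  | one =>
    have hp1 := p.adj_getVert_succ (i := 0) (by omega)
    have hq1 := q.adj_getVert_succ (i := 0) (by omega)
    rw [Walk.getVert_zero] at hp1 hq1
    exact Set.encard_le_one_iff.1 hx _ _ hp1 hq1
  | more i ih₀ ih₁ =>
    by_contra hne
    have hm := ih₁ (by omega) (by omega)
    have hpi : p.getVert i ≠ p.getVert (i + 2) := fun h ↦ by
      have := hp.getVert_injOn (show i ≤ p.length by omega) (show i + 2 ≤ p.length by omega) h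
      omega
    have hqi : p.getVert i ≠ q.getVert (i + 2) := fun h ↦ by
      have := hq.getVert_injOn (show i ≤ q.length by omega) (show i + 2 ≤ q.length by omega)
        ((ih₀ (by omega) (by omega)).symm.trans h)
      omega
    have hsub : {p.getVert i, p.getVert (i + 2), q.getVert (i + 2)} ⊆
        G.neighborSet (p.getVert (i + 1)) := by
      rintro v (rfl | rfl | rfl)
      · exact (p.adj_getVert_succ (by omega)).symm
      · exact p.adj_getVert_succ (i := i + 1) (by omega)
      · exact hm ▸ q.adj_getVert_succ (i := i + 1) (by omega)
    have h3 := (Set.encard_le_encard hsub).trans (hdeg _)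
    rw [Set.encard_eq_three.2 ⟨_, _, _, hpi, hqi, hne, rfl⟩] at h3
    norm_num at h3

theorem Walk.IsPath.eq_or_eq_of_length_le
    (hdeg : ∀ v, (G.neighborSet v).encard ≤ 2) (hx : (G.neighborSet x).encard ≤ 1)
    {u w : V} (hu : (G.neighborSet u).encard ≤ 1) {p : G.Walk x u} {q : G.Walk x w}
    (hp : p.IsPath) (hq : q.IsPath) (hpq : p.length ≤ q.length) : u = x ∨ u = w := by
  have hu' : q.getVert p.length = u := by
    rw [← hp.getVert_eq_getVert hdeg hx hq le_rfl hpq, Walk.getVert_length]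
  rcases Nat.eq_zero_or_pos p.length with h0 | hpos
  · exact .inl (by rw [← hu', h0, Walk.getVert_zero])
  rcases hpq.eq_or_lt with hlen | hlt
  · exact .inr (by rw [← hu', hlen, Walk.getVert_length])
  have hprev := q.adj_getVert_succ (i := p.length - 1) (by omega)
  have hnext := q.adj_getVert_succ (i := p.length) hlt
  rw [Nat.sub_add_cancel hpos, hu'] at hprev
  rw [hu'] at hnext
  have := hq.getVert_injOn (show p.length - 1 ≤ q.length by omega)
    (show p.length + 1 ≤ q.length by omega) (Set.encard_le_one_iff.1 hu _ _ hprev.symm hnext)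
  omega

theorem not_reachable_of_encard_neighborSet_le
    (hdeg : ∀ v, (G.neighborSet v).encard ≤ 2) {u w : V} (hx : (G.neighborSet x).encard ≤ 1)
    (hu : (G.neighborSet u).encard ≤ 1) (hw : (G.neighborSet w).encard ≤ 1) (hxu : x ≠ u)
    (hxw : x ≠ w) (huw : u ≠ w) (hreach : G.Reachable x u) : ¬ G.Reachable x w := by
  classical
  rintro ⟨q⟩
  obtain ⟨p⟩ := hreach
  rcases le_total p.bypass.length q.bypass.length with h | h
  · rcases p.bypass_isPath.eq_or_eq_of_length_le hdeg hx hu q.bypass_isPath h with h | h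
    exacts [hxu h.symm, huw h]
  · rcases q.bypass_isPath.eq_or_eq_of_length_le hdeg hx hw p.bypass_isPath h with h | h
    exacts [hxw h.symm, huw h.symm]

section Kempe

variable {c d : α} {w₀ : V}

def kempeGraph (G : SimpleGraph V) (C : Sym2 V → α) (c d : α) : SimpleGraph V where
  Adj u v := G.Adj u v ∧ (C s(u, v) = c ∨ C s(u, v) = d)
  symm := ⟨fun u v h ↦ ⟨h.1.symm, by rw [Sym2.eq_swap]; exact h.2⟩⟩
  loopless := ⟨fun _ h ↦ G.irrefl h.1⟩

theorem kempeGraph_adj {u v : V} :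
    (G.kempeGraph C c d).Adj u v ↔ G.Adj u v ∧ (C s(u, v) = c ∨ C s(u, v) = d) :=
  Iff.rfl

theorem IsProperEdgeColoring.encard_neighborSet_kempeGraph_le (hC : G.IsProperEdgeColoring C)
    {S : Set α} (hS : ∀ w, (G.kempeGraph C c d).Adj v w → C s(v, w) ∈ S) :
    ((G.kempeGraph C c d).neighborSet v).encard ≤ S.encard :=
  Set.encard_le_encard_of_injOn (fun w hw ↦ hS w hw)
    fun _ hw _ hw' h ↦ by_contra fun hne ↦
      hC (kempeGraph_adj.1 hw).1 (kempeGraph_adj.1 hw').1 hne h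

theorem IsProperEdgeColoring.encard_neighborSet_kempeGraph_le_two
    (hC : G.IsProperEdgeColoring C) (v : V) :
    ((G.kempeGraph C c d).neighborSet v).encard ≤ 2 :=
  (hC.encard_neighborSet_kempeGraph_le (S := {c, d}) fun _ h ↦ (kempeGraph_adj.1 h).2).trans <|
    (Set.encard_insert_le _ _).trans (by rw [Set.encard_singleton]; norm_num)

theorem IsProperEdgeColoring.encard_neighborSet_kempeGraph_le_one
    (hC : G.IsProperEdgeColoring C) (hv : G.IsMissing C v c ∨ G.IsMissing C v d) :
    ((G.kempeGraph C c d).neighborSet v).encard ≤ 1 := by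
  rcases hv with hv | hv
  · refine (hC.encard_neighborSet_kempeGraph_le (S := {d}) fun w h ↦ ?_).trans_eq
      (Set.encard_singleton d)
    exact (kempeGraph_adj.1 h).2.resolve_left (hv (kempeGraph_adj.1 h).1)
  · refine (hC.encard_neighborSet_kempeGraph_le (S := {c}) fun w h ↦ ?_).trans_eq
      (Set.encard_singleton c)
    exact (kempeGraph_adj.1 h).2.resolve_right (hv (kempeGraph_adj.1 h).1)

variable [DecidableEq α]

open Classical in
/-- Edges of other colours inside the component are fixed by `Equiv.swap c d`, so this exchanges
`c` and `d` exactly on the Kempe chain through `w₀`. -/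
noncomputable def kempeSwap (G : SimpleGraph V) (C : Sym2 V → α) (c d : α) (w₀ : V) :
    Sym2 V → α := fun e ↦
  if ∀ v ∈ e, (G.kempeGraph C c d).Reachable w₀ v then Equiv.swap c d (C e) else C e

theorem kempeSwap_of_ne {e : Sym2 V} (hc : C e ≠ c) (hd : C e ≠ d) :
    G.kempeSwap C c d w₀ e = C e := by
  unfold kempeSwap
  split_ifs
  exacts [Equiv.swap_apply_of_ne_of_ne hc hd, rfl]

theorem kempeSwap_of_not_reachable (hv : ¬ (G.kempeGraph C c d).Reachable w₀ v) (w : V) :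
    G.kempeSwap C c d w₀ s(v, w) = C s(v, w) :=
  if_neg fun h ↦ hv (h v (Sym2.mem_mk_left v w))

theorem kempeSwap_of_reachable (hv : (G.kempeGraph C c d).Reachable w₀ v) (hvw : G.Adj v w) :
    G.kempeSwap C c d w₀ s(v, w) = Equiv.swap c d (C s(v, w)) := by
  by_cases hcd : C s(v, w) = c ∨ C s(v, w) = d
  · have hw : (G.kempeGraph C c d).Reachable w₀ w :=
      hv.trans (kempeGraph_adj.2 ⟨hvw, hcd⟩).reachable
    refine if_pos fun u hu ↦ ?_
    rcases Sym2.mem_iff.1 hu with rfl | rfl <;> assumption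
  · push Not at hcd
    rw [Equiv.swap_apply_of_ne_of_ne hcd.1 hcd.2, kempeSwap_of_ne hcd.1 hcd.2]

theorem IsProperEdgeColoring.kempeSwap (hC : G.IsProperEdgeColoring C) :
    G.IsProperEdgeColoring (G.kempeSwap C c d w₀) := by
  intro u v w huv huw hvw
  by_cases hu : (G.kempeGraph C c d).Reachable w₀ u
  · rw [kempeSwap_of_reachable hu huv, kempeSwap_of_reachable hu huw]
    exact (Equiv.injective _).ne (hC huv huw hvw)
  · rw [kempeSwap_of_not_reachable hu, kempeSwap_of_not_reachable hu]
    exact hC huv huw hvw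

theorem isMissing_kempeSwap_iff_of_reachable (hv : (G.kempeGraph C c d).Reachable w₀ v) :
    G.IsMissing (G.kempeSwap C c d w₀) v a ↔ G.IsMissing C v (Equiv.swap c d a) := by
  unfold IsMissing
  refine forall₂_congr fun w hvw ↦ ?_
  rw [kempeSwap_of_reachable hv hvw, Ne, Ne, Equiv.swap_apply_eq_iff]

theorem isMissing_kempeSwap_iff_of_not_reachable
    (hv : ¬ (G.kempeGraph C c d).Reachable w₀ v) :
    G.IsMissing (G.kempeSwap C c d w₀) v a ↔ G.IsMissing C v a := by
  unfold IsMissing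
  exact forall₂_congr fun w _ ↦ by rw [kempeSwap_of_not_reachable hv]

theorem IsMissing.kempeSwap_of_ne (hv : G.IsMissing C v a) (hc : a ≠ c) (hd : a ≠ d) :
    G.IsMissing (G.kempeSwap C c d w₀) v a := by
  by_cases h : (G.kempeGraph C c d).Reachable w₀ v
  · rwa [isMissing_kempeSwap_iff_of_reachable h, Equiv.swap_apply_of_ne_of_ne hc hd]
  · rwa [isMissing_kempeSwap_iff_of_not_reachable h]

end Kempe

/-- A Vizing fan at `x` with spokes `x (f 0), …, x (f k)`; the spoke `x (f 0)` is the uncoloured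
edge. -/
structure IsFan (G : SimpleGraph V) (C : Sym2 V → α) (x : V) (f : ℕ → V) (k : ℕ) :
    Prop where
  injOn : Set.InjOn f (Set.Iic k)
  adj : ∀ i ≤ k, G.Adj x (f i)
  isMissing : ∀ i < k, (G.deleteEdges {s(x, f 0)}).IsMissing C (f i) (C s(x, f (i + 1)))

variable {f : ℕ → V} {k : ℕ}

/-- Shifting the colour of each spoke `x (f (i+1))` onto `x (f i)` moves the uncoloured edge to
`x (f k)`, which then takes the colour `a`. -/
theorem IsFan.exists_isProperEdgeColoring [DecidableEq V] (hF : G.IsFan C x f k)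
    (hC : (G.deleteEdges {s(x, f 0)}).IsProperEdgeColoring C)
    (hx : (G.deleteEdges {s(x, f 0)}).IsMissing C x a)
    (hk : (G.deleteEdges {s(x, f 0)}).IsMissing C (f k) a) :
    ∃ C' : Sym2 V → α, G.IsProperEdgeColoring C' := by
  induction k generalizing f C with
  | zero => exact ⟨_, hC.update_of_isMissing (hF.adj 0 le_rfl) hx hk⟩
  | succ k ih =>
    have hne {i j} (hi : i ≤ k + 1) (hj : j ≤ k + 1) (hij : i ≠ j) : f i ≠ f j :=
      fun h ↦ hij (hF.injOn (Set.mem_Iic.2 hi) (Set.mem_Iic.2 hj) h)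
    have hf0 : f 0 ≠ f 1 := hne (by omega) (by omega) (by omega)
    refine ih (f := fun i ↦ f (i + 1)) (C := Function.update C s(x, f 0) (C s(x, f 1)))
      ⟨fun i hi j hj h ↦ ?_, fun i hi ↦ hF.adj (i + 1) (by omega), fun i hi ↦ ?_⟩
      (hC.update_shift (hF.adj 0 (by omega)) (hF.adj 1 (by omega)) hf0 (hF.isMissing 0 (by omega)))
      (hx.update_shift (hF.adj 1 (by omega)) hf0)
      (hk.update_of_ne (hF.adj _ le_rfl).ne' (hne le_rfl (by omega) (by omega)) _)
    · simp only [Set.mem_Iic] at hi hj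
      exact Nat.succ_injective (hF.injOn (Set.mem_Iic.2 (by omega)) (Set.mem_Iic.2 (by omega)) h)
    · rw [Function.update_of_ne (mt Sym2.congr_right.1 (hne (by omega) (by omega) (by omega)))]
      exact (hF.isMissing (i + 1) (by omega)).update_of_ne (hF.adj _ (by omega)).ne'
        (hne (by omega) (by omega) (by omega)) _

theorem IsFan.of_le (hF : G.IsFan C x f k) {j : ℕ} (hjk : j ≤ k) : G.IsFan C x f j :=
  ⟨hF.injOn.mono (Set.Iic_subset_Iic.2 hjk), fun i hi ↦ hF.adj i (hi.trans hjk),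
    fun i hi ↦ hF.isMissing i (hi.trans_le hjk)⟩

theorem IsFan.kempeSwap [DecidableEq α] {c d : α} {w₀ : V} (hF : G.IsFan C x f k)
    (hcol : ∀ i < k, (C s(x, f (i + 1)) ≠ c ∧ C s(x, f (i + 1)) ≠ d) ∨
      (¬ ((G.deleteEdges {s(x, f 0)}).kempeGraph C c d).Reachable w₀ x ∧
        ¬ ((G.deleteEdges {s(x, f 0)}).kempeGraph C c d).Reachable w₀ (f i))) :
    G.IsFan ((G.deleteEdges {s(x, f 0)}).kempeSwap C c d w₀) x f k := by
  refine ⟨hF.injOn, hF.adj, fun i hi ↦ ?_⟩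
  rcases hcol i hi with ⟨hc, hd⟩ | ⟨hx, hfi⟩
  · rw [kempeSwap_of_ne hc hd]
    exact (hF.isMissing i hi).kempeSwap_of_ne hc hd
  · rw [kempeSwap_of_not_reachable hx, isMissing_kempeSwap_iff_of_not_reachable hfi]
    exact hF.isMissing i hi

theorem IsFan.exists_isProperEdgeColoring_of_kempe [DecidableEq V] [DecidableEq α] {c d : α}
    (hF : G.IsFan C x f k) (hC : (G.deleteEdges {s(x, f 0)}).IsProperEdgeColoring C)
    (hc : (G.deleteEdges {s(x, f 0)}).IsMissing C x c)
    (hd : (G.deleteEdges {s(x, f 0)}).IsMissing C (f k) d) {j : ℕ} (hj : j < k)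
    (hjd : C s(x, f (j + 1)) = d) : ∃ C' : Sym2 V → α, G.IsProperEdgeColoring C' := by
  set G' := G.deleteEdges {s(x, f 0)}
  set K := G'.kempeGraph C c d
  have hne {i i'} (hi : i ≤ k) (hi' : i' ≤ k) (h : i ≠ i') : f i ≠ f i' :=
    fun h' ↦ h (hF.injOn hi hi' h')
  have hadj {i} (hi : 0 < i) (hik : i ≤ k) : G'.Adj x (f i) :=
    deleteEdges_adj.2 ⟨hF.adj i hik, mt Sym2.congr_right.1 (hne hik (Nat.zero_le k) hi.ne')⟩
  have hcd : c ≠ d := fun h ↦ hc (hadj (Nat.succ_pos j) hj) (hjd.trans h.symm)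
  have hdj : G'.IsMissing C (f j) d := hjd ▸ hF.isMissing j hj
  have hcol : ∀ i < k, i ≠ j → C s(x, f (i + 1)) ≠ c ∧ C s(x, f (i + 1)) ≠ d := fun i hi hij ↦
    ⟨hc (hadj i.succ_pos hi), hjd ▸ hC (hadj i.succ_pos hi) (hadj j.succ_pos hj)
      (hne hi hj (by omega))⟩
  have hx1 := hC.encard_neighborSet_kempeGraph_le_one (d := d) (.inl hc)
  have hj1 := hC.encard_neighborSet_kempeGraph_le_one (c := c) (.inr hdj)
  have hk1 := hC.encard_neighborSet_kempeGraph_le_one (c := c) (.inr hd)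
  by_cases hxj : K.Reachable x (f j)
  · have hkx : ¬ K.Reachable (f k) x := fun h ↦
      not_reachable_of_encard_neighborSet_le hC.encard_neighborSet_kempeGraph_le_two hx1 hj1 hk1
        (hF.adj j hj.le).ne (hF.adj k le_rfl).ne (hne hj.le le_rfl hj.ne) hxj h.symm
    have hkj : ¬ K.Reachable (f k) (f j) := fun h ↦ hkx (h.trans hxj.symm)
    refine (hF.kempeSwap fun i hi ↦ ?_).exists_isProperEdgeColoring hC.kempeSwap
      ((isMissing_kempeSwap_iff_of_not_reachable hkx).2 hc)
      ((isMissing_kempeSwap_iff_of_reachable .rfl).2 (by rwa [Equiv.swap_apply_left]))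
    rcases eq_or_ne i j with rfl | hij
    exacts [.inr ⟨hkx, hkj⟩, .inl (hcol i hi hij)]
  · have hF' := (hF.of_le hj.le).kempeSwap (w₀ := x) fun i hi ↦ .inl (hcol i (hi.trans hj) hi.ne)
    exact hF'.exists_isProperEdgeColoring hC.kempeSwap
      ((isMissing_kempeSwap_iff_of_reachable .rfl).2 (by rwa [Equiv.swap_apply_right]))
      ((isMissing_kempeSwap_iff_of_not_reachable hxj).2 hdj)

theorem exists_isFan [Finite V] (hxy : G.Adj x y) (m : V → α)
    (hm : ∀ v, (G.deleteEdges {s(x, y)}).IsMissing C v (m v)) :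
    ∃ f k, f 0 = y ∧ G.IsFan C x f k ∧ ((G.deleteEdges {s(x, y)}).IsMissing C x (m (f k)) ∨
      ∃ j < k, C s(x, f (j + 1)) = m (f k)) := by
  classical
  set G' := G.deleteEdges {s(x, y)}
  let next (v : V) : V := if h : ∃ z, G'.Adj x z ∧ C s(x, z) = m v then h.choose else v
  let f (n : ℕ) : V := next^[n] y
  have hf {i} (hi : ¬ G'.IsMissing C x (m (f i))) :
      G'.Adj x (f (i + 1)) ∧ C s(x, f (i + 1)) = m (f i) := by
    have h : ∃ z, G'.Adj x z ∧ C s(x, z) = m (f i) := by simpa [IsMissing] using hi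
    simp only [f, Function.iterate_succ_apply', next, dif_pos h]
    exact h.choose_spec
  obtain ⟨k, hinj, hbefore, hend⟩ :=
    exists_first_stop_or_repeat f fun n ↦ G'.IsMissing C x (m (f n))
  refine ⟨f, k, rfl, ⟨hinj, fun i hi ↦ ?_, fun i hi ↦ ?_⟩, ?_⟩
  · cases i with
    | zero => exact hxy
    | succ i => exact (deleteEdges_adj.1 (hf (hbefore i (by omega))).1).1
  · rw [(hf (hbefore i hi)).2]
    exact hm _
  · by_cases hk : G'.IsMissing C x (m (f k))
    · exact .inl hk
    obtain ⟨j, hj, hrep⟩ := hend.resolve_left hk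
    obtain ⟨hadj, hcol⟩ := hf hk
    cases j with
    | zero => exact absurd (hrep ▸ hadj) fun h ↦ (deleteEdges_adj.1 h).2 rfl
    | succ j => exact .inr ⟨j, by omega, hrep ▸ hcol⟩

theorem exists_isProperEdgeColoring_of_deleteEdges [Finite V] [DecidableEq V] [DecidableEq α]
    (hxy : G.Adj x y) (hC : (G.deleteEdges {s(x, y)}).IsProperEdgeColoring C)
    (hmiss : ∀ v, ∃ a, (G.deleteEdges {s(x, y)}).IsMissing C v a) :
    ∃ C' : Sym2 V → α, G.IsProperEdgeColoring C' := by
  obtain ⟨c, hc⟩ := hmiss x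
  choose m hm using hmiss
  obtain ⟨f, k, rfl, hF, hk | ⟨j, hj, hjk⟩⟩ := exists_isFan hxy m hm
  · exact hF.exists_isProperEdgeColoring hC hk (hm _)
  · exact hF.exists_isProperEdgeColoring_of_kempe hC hc (hm _) hj hjk

theorem exists_isProperEdgeColoring [Fintype V] [DecidableRel G.Adj] [Fintype α]
    (h : G.maxDegree < Fintype.card α) : ∃ C : Sym2 V → α, G.IsProperEdgeColoring C := by
  classical
  have : Nonempty α := Fintype.card_pos_iff.1 (by omega)
  suffices ∀ s ⊆ G.edgeFinset,
      ∃ C : Sym2 V → α, (fromEdgeSet (s : Set (Sym2 V))).IsProperEdgeColoring C by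
    simpa [coe_edgeFinset, fromEdgeSet_edgeSet] using this _ subset_rfl
  intro S hS
  induction S using Finset.induction_on with
  | empty => exact ⟨fun _ ↦ Classical.arbitrary α, fun u v w huv ↦ by simp at huv⟩
  | insert e s hes ih =>
    obtain ⟨C, hC⟩ := ih ((Finset.subset_insert e s).trans hS)
    obtain ⟨x, y⟩ := e
    have hxy : G.Adj x y := G.mem_edgeFinset.1 (hS (Finset.mem_insert_self _ _))
    have hdel : (fromEdgeSet (insert s(x, y) s : Set (Sym2 V))).deleteEdges {s(x, y)} =
        fromEdgeSet s := by
      rw [deleteEdges_fromEdgeSet, Set.insert_sdiff_self_of_notMem (by simpa using hes)]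
    have hle : fromEdgeSet (s : Set (Sym2 V)) ≤ G := fun _ _ h ↦
      G.mem_edgeFinset.1 (hS (Finset.mem_insert_of_mem ((fromEdgeSet_adj _).1 h).1))
    rw [Finset.coe_insert]
    exact exists_isProperEdgeColoring_of_deleteEdges (C := C) (by simpa using hxy.ne) (hdel ▸ hC)
      fun v ↦ hdel ▸ exists_isMissing_of_le hle ((G.degree_le_maxDegree v).trans_lt h) C

end SimpleGraph

theorem vizing_edge_colouring_general {V : Type*} [Fintype V]
    (G : SimpleGraph V) [DecidableRel G.Adj] :
    ∃ C : Sym2 V → Fin (G.maxDegree + 1),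
      ∀ e₁ ∈ G.edgeSet, ∀ e₂ ∈ G.edgeSet, e₁ ≠ e₂ →
        (∃ v : V, v ∈ e₁ ∧ v ∈ e₂) → C e₁ ≠ C e₂ := by
  obtain ⟨C, hC⟩ := G.exists_isProperEdgeColoring (α := Fin (G.maxDegree + 1)) (by simp)
  exact ⟨C, fun e₁ he₁ e₂ he₂ hne ⟨v, hv₁, hv₂⟩ ↦ hC.ne_of_mem he₁ he₂ hne hv₁ hv₂⟩

/-- Vizing-type depth bound for CZ-gate scheduling: the edges of a finite simple graph `G`
with maximum degree `Δ` can be properly coloured with `Δ + 1` colours (equivalently,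
partitioned into at most `Δ + 1` matchings): there is a colouring of edges such that any two
distinct edges sharing a vertex get different colours. -/
theorem vizing_edge_colouring {V : Type*} [Fintype V] [DecidableEq V]
    (G : SimpleGraph V) [DecidableRel G.Adj] :
    ∃ C : Sym2 V → Fin (G.maxDegree + 1),
      ∀ e₁ ∈ G.edgeSet, ∀ e₂ ∈ G.edgeSet, e₁ ≠ e₂ →
        (∃ v : V, v ∈ e₁ ∧ v ∈ e₂) → C e₁ ≠ C e₂ :=
  vizing_edge_colouring_general G
end
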